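/- arXiv:1708.03950 — 2 statements merged into one kernel-verified Lean document; each statement's English description precedes it below -/
import Mathlib

section
/- Let φ: (ℝ^n)^t → ℝ be pseudo-Lipschitz of order k with constant L, let a ≥ 0, and let Z ~ N(0, a·I_n). Then the function ψ(x₁,…,x_t) = E[φ(x₁,…,x_{t-1}, x_t + Z)] is pseudo-Lipschitz of order k with a constant depending only on L, k, a, and t. -/
open Finset MeasureTheory ProbabilityTheory

/-- Euclidean norm of an element of `(ℝ^n)^t ≅ ℝ^{nt}`. -/
noncomputable def tnorm {t n : ℕ} (x : Fin t → Fin n → ℝ) : ℝ :=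
  Real.sqrt (∑ s, ∑ i, (x s i) ^ 2)

/-- `φ : (ℝ^n)^t → ℝ` is pseudo-Lipschitz of order `k` with constant `L`,
viewing `(ℝ^n)^t ≅ ℝ^{nt}` (norms normalized by `√(nt)`). -/
def PseudoLipschitzMulti (n t k : ℕ) (L : ℝ) (φ : (Fin t → Fin n → ℝ) → ℝ) : Prop :=
  ∀ x y : Fin t → Fin n → ℝ,
    |φ x - φ y| ≤
      L * (1 + (tnorm x / Real.sqrt (n * t)) ^ (k - 1)
             + (tnorm y / Real.sqrt (n * t)) ^ (k - 1)) *
        (tnorm (x - y) / Real.sqrt (n * t))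

/-! ### Auxiliary lemmas -/

lemma PL.tnorm_nonneg {t n : ℕ} (x : Fin t → Fin n → ℝ) : 0 ≤ tnorm x :=
  Real.sqrt_nonneg _

noncomputable def PL.temb {t n : ℕ} (x : Fin t → Fin n → ℝ) :
    EuclideanSpace ℝ (Fin t × Fin n) :=
  (WithLp.equiv 2 _).symm (fun p : Fin t × Fin n => x p.1 p.2)

lemma PL.tnorm_eq_norm {t n : ℕ} (x : Fin t → Fin n → ℝ) : tnorm x = ‖PL.temb x‖ := by
  rw [EuclideanSpace.norm_eq, tnorm]
  congr 1
  rw [Fintype.sum_prod_type]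
  exact Finset.sum_congr rfl fun s _ => Finset.sum_congr rfl fun i _ => by
    simp [PL.temb, Real.norm_eq_abs, sq_abs]

lemma PL.temb_add {t n : ℕ} (x y : Fin t → Fin n → ℝ) :
    PL.temb (x + y) = PL.temb x + PL.temb y := rfl

lemma PL.tnorm_add_le {t n : ℕ} (x y : Fin t → Fin n → ℝ) :
    tnorm (x + y) ≤ tnorm x + tnorm y := by
  rw [PL.tnorm_eq_norm, PL.tnorm_eq_norm, PL.tnorm_eq_norm, PL.temb_add]
  exact norm_add_le _ _

lemma PL.tnorm_zero {t n : ℕ} : tnorm (0 : Fin t → Fin n → ℝ) = 0 := by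
  simp [tnorm]

lemma PL.continuous_tnorm {t n : ℕ} : Continuous (tnorm (t := t) (n := n)) :=
  Real.continuous_sqrt.comp <| continuous_finset_sum _ fun s _ =>
    continuous_finset_sum _ fun i _ => ((continuous_apply i).comp (continuous_apply s)).pow 2

lemma PL.update_eq_add {t n : ℕ} (x : Fin (t+1) → Fin n → ℝ) (z : Fin n → ℝ) :
    Function.update x (Fin.last t) (fun i => x (Fin.last t) i + z i)
      = x + Function.update (0 : Fin (t+1) → Fin n → ℝ) (Fin.last t) z := by
  funext s i
  by_cases hs : s = Fin.last t
  · subst hs; simp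
  · simp [Function.update_of_ne hs]

lemma PL.tnorm_update_zero {t n : ℕ} (z : Fin n → ℝ) :
    tnorm (Function.update (0 : Fin (t+1) → Fin n → ℝ) (Fin.last t) z)
      = Real.sqrt (∑ i, z i ^ 2) := by
  rw [tnorm]
  congr 1
  rw [Finset.sum_eq_single (Fin.last t)]
  · simp
  · intro j _ hj; simp [Function.update_of_ne hj]
  · exact fun h => absurd (Finset.mem_univ _) h

lemma PL.update_sub_update {t n : ℕ} (x y : Fin (t+1) → Fin n → ℝ) (z : Fin n → ℝ) :
    Function.update x (Fin.last t) (fun i => x (Fin.last t) i + z i)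
      - Function.update y (Fin.last t) (fun i => y (Fin.last t) i + z i) = x - y := by
  funext s i
  by_cases hs : s = Fin.last t
  · subst hs; simp
  · simp [Function.update_of_ne hs]

lemma PL.continuous_of_pl {n t k : ℕ} {L : ℝ} {φ : (Fin t → Fin n → ℝ) → ℝ}
    (hφ : PseudoLipschitzMulti n t k L φ) : Continuous φ := by
  rw [continuous_iff_continuousAt]
  intro x₀
  rw [ContinuousAt, tendsto_iff_dist_tendsto_zero]
  simp only [Real.dist_eq]
  refine squeeze_zero (fun y => abs_nonneg _) (fun y => hφ y x₀) ?_
  have hc : Continuous (fun y : Fin t → Fin n → ℝ =>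
      L * (1 + (tnorm y / Real.sqrt (n * t)) ^ (k - 1)
             + (tnorm x₀ / Real.sqrt (n * t)) ^ (k - 1)) *
        (tnorm (y - x₀) / Real.sqrt (n * t))) := by
    refine (continuous_const.mul ?_).mul ?_
    · exact (continuous_const.add ((PL.continuous_tnorm.div_const _).pow _)).add continuous_const
    · exact (PL.continuous_tnorm.comp (continuous_id.sub continuous_const)).div_const _
  have := hc.tendsto x₀
  simpa [PL.tnorm_zero] using this

lemma PL.add_pow_le {a b : ℝ} (ha : 0 ≤ a) (hb : 0 ≤ b) (j : ℕ) :
    (a + b) ^ j ≤ 2 ^ j * (a ^ j + b ^ j) := by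
  calc (a + b) ^ j ≤ (2 * max a b) ^ j := by
        refine pow_le_pow_left₀ (by positivity) ?_ j
        rcases max_cases a b with ⟨h1, h2⟩ | ⟨h1, h2⟩ <;> rw [h1] <;> linarith
    _ = 2 ^ j * (max a b) ^ j := mul_pow _ _ _
    _ ≤ 2 ^ j * (a ^ j + b ^ j) := by
        refine mul_le_mul_of_nonneg_left ?_ (by positivity)
        rcases max_cases a b with ⟨h1, h2⟩ | ⟨h1, h2⟩ <;> rw [h1]
        · nlinarith [pow_nonneg hb j]
        · nlinarith [pow_nonneg ha j]

lemma PL.pow_le_one_add_sq_pow {r : ℝ} (hr : 0 ≤ r) (m : ℕ) :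
    r ^ m ≤ 1 + (r ^ 2) ^ m := by
  rcases le_total r 1 with h | h
  · have := pow_le_one₀ hr h (n := m)
    nlinarith [pow_nonneg (pow_nonneg hr 2) m]
  · have h1 : r ^ m ≤ r ^ (2 * m) := pow_le_pow_right₀ h (by omega)
    rw [pow_mul] at h1
    linarith

/-- Jensen-type bound: `((∑ zᵢ²)/n)^m ≤ (∑ zᵢ^(2m))/n`. -/
lemma PL.sum_sq_pow_le {n : ℕ} (hn : 0 < n) (z : Fin n → ℝ) (m : ℕ) :
    ((∑ i, z i ^ 2) / n) ^ m ≤ (∑ i, z i ^ (2 * m)) / n := by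
  have hn0 : (0:ℝ) < n := by exact_mod_cast hn
  rcases Nat.eq_zero_or_pos m with rfl | hm
  · simp [div_self hn0.ne']
  obtain ⟨m', rfl⟩ : ∃ m', m = m' + 1 := ⟨m - 1, by omega⟩
  have h := pow_sum_le_card_mul_sum_pow (s := Finset.univ)
    (f := fun i => z i ^ 2) (fun i _ => sq_nonneg _) m'
  rw [Finset.card_univ, Fintype.card_fin] at h
  have hsum : ∑ i, (z i ^ 2) ^ (m' + 1) = ∑ i, z i ^ (2 * (m' + 1)) := by
    refine Finset.sum_congr rfl fun i _ => ?_
    rw [← pow_mul]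
  rw [hsum] at h
  rw [div_pow]
  rw [div_le_div_iff₀ (by positivity) hn0]
  calc (∑ i, z i ^ 2) ^ (m' + 1) * n
      ≤ ((n:ℝ) ^ m' * ∑ i, z i ^ (2 * (m' + 1))) * n := by
        exact mul_le_mul_of_nonneg_right h hn0.le
    _ = (∑ i, z i ^ (2 * (m' + 1))) * (n:ℝ) ^ (m' + 1) := by ring

lemma PL.gauss_moment_integrable (a : NNReal) (p : ℕ) :
    Integrable (fun x : ℝ => x ^ p) (gaussianReal 0 a) := by
  rcases eq_or_ne a 0 with rfl | ha
  · rw [gaussianReal_zero_var]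
    refine (integrable_const ((0:ℝ) ^ p)).congr ?_
    rw [Filter.EventuallyEq, ae_dirac_eq]
    simp
  · rw [gaussianReal_of_var_ne_zero 0 ha]
    rw [integrable_withDensity_iff (measurable_gaussianPDF _ _)
      (ae_of_all _ fun x => ENNReal.ofReal_lt_top)]
    have ha0 : (0:ℝ) < (a:ℝ) := by positivity
    have hb : (0:ℝ) < (2 * (a:ℝ))⁻¹ := by positivity
    have h := integrable_rpow_mul_exp_neg_mul_sq hb
      (s := (p:ℝ)) (by exact_mod_cast neg_one_lt_zero.trans_le (Nat.cast_nonneg p))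
    simp_rw [Real.rpow_natCast] at h
    refine (h.const_mul ((Real.sqrt (2 * Real.pi * (a:ℝ)))⁻¹)).congr (ae_of_all _ fun x => ?_)
    have htr : (gaussianPDF 0 a x).toReal = gaussianPDFReal 0 a x :=
      ENNReal.toReal_ofReal (gaussianPDFReal_nonneg _ _ _)
    simp only [htr, gaussianPDFReal, sub_zero]
    rw [show -(2 * (a:ℝ))⁻¹ * x ^ 2 = -x ^ 2 / (2 * (a:ℝ)) by ring]
    ring

lemma PL.pi_map_eval {n : ℕ} (μs : Fin n → Measure ℝ) [∀ i, IsProbabilityMeasure (μs i)]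
    (i : Fin n) : (Measure.pi μs).map (Function.eval i) = μs i := by
  ext s hs
  rw [Measure.map_apply (measurable_pi_apply i) hs, Set.eval_preimage, Measure.pi_pi]
  rw [Finset.prod_eq_single i (fun j _ hj => by simp [Function.update_of_ne hj])
    (fun h => absurd (Finset.mem_univ i) h), Function.update_self]

set_option maxHeartbeats 2000000 in
/-- Main theorem. -/
theorem stmt1 :
    ∃ C : ℝ → ℕ → NNReal → ℕ → ℝ,
      ∀ (n t k : ℕ) (a : NNReal) (L : ℝ) (φ : (Fin (t + 1) → Fin n → ℝ) → ℝ),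
        PseudoLipschitzMulti n (t + 1) k L φ →
        PseudoLipschitzMulti n (t + 1) k (C L k a (t + 1))
          (fun x => ∫ z : Fin n → ℝ,
            φ (Function.update x (Fin.last t) (fun i => x (Fin.last t) i + z i))
              ∂(Measure.pi fun _ : Fin n => gaussianReal 0 a)) := by
  refine ⟨fun L k a _ => |L| * 2 ^ (k - 1) *
      (3 + 2 * ∫ x : ℝ, x ^ (2 * (k - 1)) ∂(gaussianReal 0 a)), ?_⟩
  intro n t k a L φ hφ
  intro x y
  simp only []
  set m := k - 1 with hm
  set μ : Measure (Fin n → ℝ) := Measure.pi fun _ : Fin n => gaussianReal 0 a with hμ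
  have hprob : IsProbabilityMeasure μ := by rw [hμ]; infer_instance
  set M : ℝ := ∫ x : ℝ, x ^ (2 * m) ∂(gaussianReal 0 a) with hMdef
  have hM0 : 0 ≤ M := integral_nonneg fun x => by
    rw [mul_comm, pow_mul]; positivity
  set U : (Fin (t+1) → Fin n → ℝ) → (Fin n → ℝ) → (Fin (t+1) → Fin n → ℝ) :=
    fun w z => Function.update w (Fin.last t) (fun i => w (Fin.last t) i + z i) with hU
  rcases Nat.eq_zero_or_pos n with hn | hn
  · -- n = 0 : x = y
    subst hn
    have hxy : x = y := funext fun s => funext fun i => i.elim0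
    subst hxy
    simp [sub_self, PL.tnorm_zero]
  -- main case n ≥ 1
  set s : ℝ := Real.sqrt ((n : ℝ) * ((t:ℝ) + 1)) with hs
  have hnt1 : (1:ℝ) ≤ (n : ℝ) * ((t:ℝ) + 1) := by
    have h1 : (1:ℝ) ≤ (n:ℝ) := by exact_mod_cast hn
    nlinarith [Nat.cast_nonneg (α := ℝ) t]
  have hs1 : 1 ≤ s := by
    calc (1:ℝ) = Real.sqrt 1 := Real.sqrt_one.symm
      _ ≤ s := Real.sqrt_le_sqrt hnt1
  have hs0 : 0 < s := lt_of_lt_of_le one_pos hs1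
  have hsn : Real.sqrt n ≤ s := by
    refine Real.sqrt_le_sqrt ?_
    nlinarith [Nat.cast_nonneg (α := ℝ) n, Nat.cast_nonneg (α := ℝ) t]
  have hcφ : Continuous φ := PL.continuous_of_pl hφ
  have hUc : ∀ w, Continuous fun z : Fin n → ℝ => U w z := fun w =>
    continuous_const.update (Fin.last t)
      (continuous_pi fun i => continuous_const.add (continuous_apply i))
  -- coordinates are integrable with the right moments
  have hmap : ∀ i : Fin n, μ.map (fun z : Fin n → ℝ => z i) = gaussianReal 0 a := by
    intro i
    rw [hμ]
    exact PL.pi_map_eval _ i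
  have hcoord : ∀ (q : ℕ) (i : Fin n), Integrable (fun z : Fin n → ℝ => z i ^ q) μ := by
    intro q i
    have h1 : Integrable (fun x : ℝ => x ^ q) (μ.map (fun z : Fin n → ℝ => z i)) := by
      rw [hmap]
      exact PL.gauss_moment_integrable a q
    exact (integrable_map_measure (measurable_id'.pow_const q).aestronglyMeasurable
      (measurable_pi_apply i).aemeasurable).mp h1
  have hSint : ∀ q : ℕ, Integrable (fun z : Fin n → ℝ => ∑ i, z i ^ q) μ := fun q =>
    integrable_finset_sum _ fun i _ => hcoord q i
  have hval : ∀ i : Fin n, ∫ z : Fin n → ℝ, z i ^ (2 * m) ∂μ = M := by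
    intro i
    have h3 := integral_map (μ := μ) (f := fun x : ℝ => x ^ (2 * m))
      (measurable_pi_apply i).aemeasurable (measurable_id'.pow_const _).aestronglyMeasurable
    rw [hmap i] at h3
    exact h3.symm
  have hn0 : (0:ℝ) < (n:ℝ) := by exact_mod_cast hn
  -- integrability of powers of (1 + ∑ zᵢ²)
  have hpowint : ∀ j : ℕ, Integrable (fun z : Fin n → ℝ => (1 + ∑ i, z i ^ 2) ^ j) μ := by
    intro j
    refine Integrable.mono'
      (g := fun z => 2 ^ j * (1 + (n:ℝ) ^ j * ((∑ i, z i ^ (2 * j)) / n)))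
      ((((integrable_const (1:ℝ)).add
        (((hSint (2 * j)).div_const _).const_mul _)).const_mul _)) ?_ (ae_of_all _ fun z => ?_)
    · refine Measurable.aestronglyMeasurable ?_
      exact (measurable_const.add
        (Finset.measurable_sum _ fun i _ => (measurable_pi_apply i).pow_const 2)).pow_const j
    · have hS0 : 0 ≤ ∑ i, z i ^ 2 := Finset.sum_nonneg fun i _ => sq_nonneg _
      rw [Real.norm_eq_abs, abs_of_nonneg (by positivity)]
      have h1 : ((∑ i, z i ^ 2) / n) ^ j ≤ (∑ i, z i ^ (2 * j)) / n := PL.sum_sq_pow_le hn z j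
      have h2 : (∑ i, z i ^ 2) ^ j = (n:ℝ) ^ j * ((∑ i, z i ^ 2) / n) ^ j := by
        rw [← mul_pow, mul_div_cancel₀ _ hn0.ne']
      have h3 : (∑ i, z i ^ 2) ^ j ≤ (n:ℝ) ^ j * ((∑ i, z i ^ (2 * j)) / n) := by
        rw [h2]; exact mul_le_mul_of_nonneg_left h1 (by positivity)
      have h4 : (1 + ∑ i, z i ^ 2) ^ j ≤ 2 ^ j * (1 ^ j + (∑ i, z i ^ 2) ^ j) :=
        PL.add_pow_le zero_le_one hS0 j
      rw [one_pow] at h4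
      nlinarith [pow_nonneg (show (0:ℝ) ≤ 2 by norm_num) j]
  -- integrability of φ ∘ U w
  have hFint : ∀ w : Fin (t+1) → Fin n → ℝ, Integrable (fun z => φ (U w z)) μ := by
    intro w
    set c : ℝ := tnorm w + 1 with hcdef
    have hc1 : 1 ≤ c := by have := PL.tnorm_nonneg w; simp only [hcdef]; linarith
    have hc0 : 0 ≤ c := zero_le_one.trans hc1
    refine Integrable.mono'
      (g := fun z => |φ 0| + |L| * (2 * c + c ^ (m + 1)) * (1 + ∑ i, z i ^ 2) ^ (m + 1))
      ((integrable_const _).add ((hpowint (m+1)).const_mul _))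
      (hcφ.comp (hUc w)).aestronglyMeasurable (ae_of_all _ fun z => ?_)
    have hS0 : 0 ≤ ∑ i, z i ^ 2 := Finset.sum_nonneg fun i _ => sq_nonneg _
    set S : ℝ := ∑ i, z i ^ 2 with hSdef
    set D : ℝ := 1 + S with hDdef
    have hD1 : 1 ≤ D := by simp only [hDdef]; linarith
    have hD0 : 0 ≤ D := zero_le_one.trans hD1
    -- bound on tnorm (U w z)
    have hw0 : 0 ≤ tnorm (U w z) := PL.tnorm_nonneg _
    have htri : tnorm (U w z) ≤ tnorm w + Real.sqrt S := by
      simp only [hU]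
      rw [PL.update_eq_add w z]
      refine (PL.tnorm_add_le _ _).trans ?_
      rw [PL.tnorm_update_zero]
    set r : ℝ := tnorm (U w z) / s with hrdef
    have hr0 : 0 ≤ r := div_nonneg hw0 hs0.le
    have hrle : r ≤ c * D := by
      have h1 : r ≤ tnorm (U w z) := by
        rw [hrdef]; exact div_le_self hw0 hs1
      have h2 : Real.sqrt S ≤ 1 + S := by
        rcases le_total (Real.sqrt S) 1 with h | h
        · linarith
        · have := Real.sq_sqrt hS0
          nlinarith [Real.sqrt_nonneg S]
      have h3 : tnorm w + 1 + S ≤ c * D := by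
        simp only [hcdef, hDdef]
        nlinarith [PL.tnorm_nonneg w]
      linarith
    -- pseudo-Lipschitz bound at (U w z, 0)
    have hb0 := hφ (U w z) 0
    rw [sub_zero, PL.tnorm_zero] at hb0
    have hz0 : ((0:ℝ) / Real.sqrt ((n:ℕ) * (t+1:ℕ)) : ℝ) ^ m ≤ 1 := by
      rw [zero_div]
      exact pow_le_one₀ le_rfl zero_le_one
    have hseq : Real.sqrt (((n:ℕ):ℝ) * ((t+1:ℕ):ℝ)) = s := by
      rw [hs]; norm_num
    rw [hseq] at hb0
    rw [zero_div] at hb0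
    have hA : (1 : ℝ) + (tnorm (U w z) / s) ^ m + (0:ℝ) ^ m ≤ 2 + r ^ m := by
      have : (0:ℝ) ^ m ≤ 1 := pow_le_one₀ le_rfl zero_le_one
      simp only [hrdef]
      linarith
    have hbound : |φ (U w z) - φ 0| ≤ |L| * ((2 + r ^ m) * r) := by
      refine hb0.trans ?_
      have h1 : L * (1 + (tnorm (U w z) / s) ^ m + (0:ℝ) ^ m) ≤ |L| * (2 + r ^ m) := by
        refine mul_le_mul (le_abs_self L) hA ?_ (abs_nonneg L)
        have : (0:ℝ) ≤ (tnorm (U w z) / s) ^ m := pow_nonneg (div_nonneg hw0 hs0.le) m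
        have : (0:ℝ) ≤ (0:ℝ) ^ m := pow_nonneg le_rfl m
        positivity
      calc L * (1 + (tnorm (U w z) / s) ^ m + (0:ℝ) ^ m) * (tnorm (U w z) / s)
          ≤ |L| * (2 + r ^ m) * (tnorm (U w z) / s) :=
            mul_le_mul_of_nonneg_right h1 (div_nonneg hw0 hs0.le)
        _ = |L| * ((2 + r ^ m) * r) := by rw [hrdef]; ring
    -- now bound (2 + r^m) * r
    have hrm : r ^ m ≤ c ^ m * D ^ m := by
      calc r ^ m ≤ (c * D) ^ m := pow_le_pow_left₀ hr0 hrle m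
        _ = c ^ m * D ^ m := mul_pow _ _ _
    have hDm : D ≤ D ^ (m + 1) := by
      calc D = D ^ 1 := (pow_one D).symm
        _ ≤ D ^ (m + 1) := pow_le_pow_right₀ hD1 (by omega)
    have hDm2 : D ^ m ≤ D ^ (m + 1) := pow_le_pow_right₀ hD1 (by omega)
    have hcore : (2 + r ^ m) * r ≤ (2 * c + c ^ (m + 1)) * D ^ (m + 1) := by
      have h1 : (2 + r ^ m) * r ≤ (2 + c ^ m * D ^ m) * (c * D) := by
        refine mul_le_mul (by linarith) hrle hr0 ?_
        positivity
      have h2 : (2 + c ^ m * D ^ m) * (c * D) = 2 * c * D + c ^ (m+1) * (D ^ m * D) := by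
        ring
      have h3 : D ^ m * D = D ^ (m + 1) := by rw [pow_succ]
      rw [h2, h3] at h1
      nlinarith [mul_le_mul_of_nonneg_left hDm (show (0:ℝ) ≤ 2 * c by linarith),
        pow_nonneg hc0 (m+1)]
    have habs : |φ (U w z)| ≤ |φ 0| + |L| * ((2 + r ^ m) * r) := by
      have := abs_sub_abs_le_abs_sub (φ (U w z)) (φ 0)
      linarith
    rw [Real.norm_eq_abs]
    calc |φ (U w z)| ≤ |φ 0| + |L| * ((2 + r ^ m) * r) := habs
      _ ≤ |φ 0| + |L| * ((2 * c + c ^ (m + 1)) * D ^ (m + 1)) := by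
          have := mul_le_mul_of_nonneg_left hcore (abs_nonneg L)
          linarith
      _ = |φ 0| + |L| * (2 * c + c ^ (m + 1)) * (1 + S) ^ (m + 1) := by
          simp only [hDdef]; ring
  -- the quantity Q and its integral
  set Q : (Fin n → ℝ) → ℝ := fun z => ((∑ i, z i ^ 2) / n) ^ m with hQdef
  have hQmeas : AEStronglyMeasurable Q μ := by
    refine Measurable.aestronglyMeasurable ?_
    exact ((Finset.measurable_sum _ fun i _ =>
      (measurable_pi_apply i).pow_const 2).div_const _).pow_const m
  have hQnonneg : ∀ z, 0 ≤ Q z := by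
    intro z
    have hS0 : 0 ≤ ∑ i, z i ^ 2 := Finset.sum_nonneg fun i _ => sq_nonneg _
    positivity
  have hQle : ∀ z, Q z ≤ (∑ i, z i ^ (2 * m)) / n := fun z => PL.sum_sq_pow_le hn z m
  have hQint : Integrable Q μ := by
    refine Integrable.mono' ((hSint (2 * m)).div_const (n:ℝ)) hQmeas (ae_of_all _ fun z => ?_)
    rw [Real.norm_eq_abs, abs_of_nonneg (hQnonneg z)]
    exact hQle z
  have hQval : ∫ z, Q z ∂μ ≤ M := by
    have h1 : ∫ z, Q z ∂μ ≤ ∫ z, (∑ i, z i ^ (2 * m)) / n ∂μ :=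
      integral_mono hQint ((hSint _).div_const _) hQle
    have h2 : ∫ z, (∑ i, z i ^ (2 * m)) / n ∂μ = M := by
      rw [integral_div, integral_finset_sum _ (fun i _ => hcoord _ i)]
      rw [Finset.sum_congr rfl (fun i _ => hval i), Finset.sum_const, Finset.card_univ,
        Fintype.card_fin, nsmul_eq_mul, mul_div_assoc]
      field_simp
    linarith
  -- abbreviations for the final bound
  set Ax : ℝ := (tnorm x / s) ^ m with hAx
  set Ay : ℝ := (tnorm y / s) ^ m with hAy
  set d : ℝ := tnorm (x - y) / s with hd
  have hAx0 : 0 ≤ Ax := pow_nonneg (div_nonneg (PL.tnorm_nonneg x) hs0.le) m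
  have hAy0 : 0 ≤ Ay := pow_nonneg (div_nonneg (PL.tnorm_nonneg y) hs0.le) m
  have hd0 : 0 ≤ d := div_nonneg (PL.tnorm_nonneg _) hs0.le
  set α : ℝ := |L| * (1 + 2 ^ m * (Ax + 1) + 2 ^ m * (Ay + 1)) * d with hα
  set β : ℝ := |L| * (2 * 2 ^ m) * d with hβ
  have hβ0 : 0 ≤ β := by
    rw [hβ]
    positivity
  -- pointwise key bound
  have key : ∀ z, |φ (U x z) - φ (U y z)| ≤ α + β * Q z := by
    intro z
    have hseq : Real.sqrt (((n:ℕ):ℝ) * ((t+1:ℕ):ℝ)) = s := by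
      rw [hs]; norm_num
    have h0 := hφ (U x z) (U y z)
    rw [hseq] at h0
    rw [show U x z - U y z = x - y from PL.update_sub_update x y z] at h0
    have hS0 : 0 ≤ ∑ i, z i ^ 2 := Finset.sum_nonneg fun i _ => sq_nonneg _
    -- bound (tnorm (U w z) / s)^m for w = x, y
    have hww : ∀ w : Fin (t+1) → Fin n → ℝ,
        (tnorm (U w z) / s) ^ m ≤ 2 ^ m * ((tnorm w / s) ^ m + 1 + Q z) := by
      intro w
      have hw0 : 0 ≤ tnorm (U w z) := PL.tnorm_nonneg _
      have htri : tnorm (U w z) ≤ tnorm w + Real.sqrt (∑ i, z i ^ 2) := by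
        simp only [hU]
        rw [PL.update_eq_add w z]
        refine (PL.tnorm_add_le _ _).trans ?_
        rw [PL.tnorm_update_zero]
      have hdiv : tnorm (U w z) / s ≤ tnorm w / s + Real.sqrt (∑ i, z i ^ 2) / s := by
        rw [← add_div]
        exact div_le_div_of_nonneg_right htri hs0.le
      have h1 : (tnorm (U w z) / s) ^ m ≤ 2 ^ m * ((tnorm w / s) ^ m
          + (Real.sqrt (∑ i, z i ^ 2) / s) ^ m) := by
        refine le_trans (pow_le_pow_left₀ (div_nonneg hw0 hs0.le) hdiv m) ?_
        exact PL.add_pow_le (div_nonneg (PL.tnorm_nonneg w) hs0.le)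
          (div_nonneg (Real.sqrt_nonneg _) hs0.le) m
      -- (√S / s)^m ≤ 1 + Q z
      have hsn0 : 0 < Real.sqrt (n:ℝ) := Real.sqrt_pos.mpr hn0
      have h2 : Real.sqrt (∑ i, z i ^ 2) / s ≤ Real.sqrt (∑ i, z i ^ 2) / Real.sqrt n :=
        div_le_div_of_nonneg_left (Real.sqrt_nonneg _) hsn0 hsn
      have h3 : (Real.sqrt (∑ i, z i ^ 2) / Real.sqrt n) ^ 2 = (∑ i, z i ^ 2) / n := by
        rw [div_pow, Real.sq_sqrt hS0, Real.sq_sqrt hn0.le]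
      have h4 : (Real.sqrt (∑ i, z i ^ 2) / s) ^ m ≤ 1 + Q z := by
        refine le_trans (pow_le_pow_left₀ (div_nonneg (Real.sqrt_nonneg _) hs0.le) h2 m) ?_
        refine le_trans (PL.pow_le_one_add_sq_pow
          (div_nonneg (Real.sqrt_nonneg _) hsn0.le) m) ?_
        rw [h3, hQdef]
      have h5 : (0:ℝ) ≤ 2 ^ m := by positivity
      nlinarith [pow_nonneg (div_nonneg (PL.tnorm_nonneg w) hs0.le) m]
    have hwx := hww x
    have hwy := hww y
    have hstep : L * (1 + (tnorm (U x z) / s) ^ m + (tnorm (U y z) / s) ^ m)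
        ≤ |L| * (1 + 2 ^ m * (Ax + 1 + Q z) + 2 ^ m * (Ay + 1 + Q z)) := by
      refine mul_le_mul (le_abs_self L) ?_ ?_ (abs_nonneg L)
      · rw [hAx, hAy]; linarith
      · have h1 : (0:ℝ) ≤ (tnorm (U x z) / s) ^ m :=
          pow_nonneg (div_nonneg (PL.tnorm_nonneg _) hs0.le) m
        have h2 : (0:ℝ) ≤ (tnorm (U y z) / s) ^ m :=
          pow_nonneg (div_nonneg (PL.tnorm_nonneg _) hs0.le) m
        linarith
    calc |φ (U x z) - φ (U y z)|
        ≤ L * (1 + (tnorm (U x z) / s) ^ m + (tnorm (U y z) / s) ^ m) * d := h0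
      _ ≤ |L| * (1 + 2 ^ m * (Ax + 1 + Q z) + 2 ^ m * (Ay + 1 + Q z)) * d :=
          mul_le_mul_of_nonneg_right hstep hd0
      _ = α + β * Q z := by rw [hα, hβ]; ring
  -- integrate the key bound
  have hseq : Real.sqrt (((n:ℕ):ℝ) * ((t+1:ℕ):ℝ)) = s := by
    rw [hs]; norm_num
  have hmain : |(∫ z, φ (U x z) ∂μ) - ∫ z, φ (U y z) ∂μ| ≤ α + β * M := by
    rw [← integral_sub (hFint x) (hFint y)]
    have h1 : |∫ z, (φ (U x z) - φ (U y z)) ∂μ| ≤ ∫ z, |φ (U x z) - φ (U y z)| ∂μ := by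
      have := norm_integral_le_integral_norm (μ := μ) (fun z => φ (U x z) - φ (U y z))
      simpa [Real.norm_eq_abs] using this
    have h2 : ∫ z, |φ (U x z) - φ (U y z)| ∂μ ≤ ∫ z, (α + β * Q z) ∂μ :=
      integral_mono ((hFint x).sub (hFint y)).abs
        ((integrable_const α).add (hQint.const_mul β)) key
    have h3 : ∫ z, (α + β * Q z) ∂μ = α + β * ∫ z, Q z ∂μ := by
      rw [integral_add (integrable_const α) (hQint.const_mul β), integral_const,
        integral_const_mul]
      simp [measure_univ]
    have h4 : α + β * ∫ z, Q z ∂μ ≤ α + β * M := by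
      have := mul_le_mul_of_nonneg_left hQval hβ0
      linarith
    linarith
  -- final constant comparison
  have hcore : 1 + 2 ^ m * (Ax + 1) + 2 ^ m * (Ay + 1) + 2 * 2 ^ m * M
      ≤ 2 ^ m * (3 + 2 * M) * (1 + Ax + Ay) := by
    have h2m : (1:ℝ) ≤ 2 ^ m := one_le_pow₀ (by norm_num)
    have h1 : (0:ℝ) ≤ 2 ^ m * (2 + 2 * M) * Ax := by positivity
    have h2 : (0:ℝ) ≤ 2 ^ m * (2 + 2 * M) * Ay := by positivity
    nlinarith
  have hfin : α + β * M ≤ |L| * 2 ^ m * (3 + 2 * M) * (1 + Ax + Ay) * d := by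
    have h1 : α + β * M = |L| * d *
        (1 + 2 ^ m * (Ax + 1) + 2 ^ m * (Ay + 1) + 2 * 2 ^ m * M) := by
      rw [hα, hβ]; ring
    have h2 : |L| * d * (1 + 2 ^ m * (Ax + 1) + 2 ^ m * (Ay + 1) + 2 * 2 ^ m * M)
        ≤ |L| * d * (2 ^ m * (3 + 2 * M) * (1 + Ax + Ay)) :=
      mul_le_mul_of_nonneg_left hcore (by positivity)
    rw [h1]
    refine h2.trans (le_of_eq ?_)
    ring
  -- conclude
  rw [hseq]
  exact hmain.trans (hfin.trans (le_of_eq (by ring)))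
end

section
/- Let K ⊆ ℝ^n be a closed convex set, θ₀ ∈ K, and let C_K(θ₀) be the tangent cone of K at θ₀ (the closure of the smallest convex cone containing K − θ₀). Then for any z ∈ ℝ^n and τ ≥ 0, ‖P_K(θ₀ + τz) − θ₀‖₂ ≤ ‖P_{C_K(θ₀)}(τz)‖₂, where P_K and P_{C_K(θ₀)} denote Euclidean projections onto K and onto the tangent cone respectively. -/
open scoped RealInnerProductSpace

private lemma var_ineq {E : Type*} [NormedAddCommGroup E] [InnerProductSpace ℝ E]
    {K : Set E} (hK : Convex ℝ K) {u p : E} (hp : p ∈ K)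
    (hmin : ∀ w ∈ K, ‖u - p‖ ≤ ‖u - w‖) : ∀ w ∈ K, ⟪u - p, w - p⟫ ≤ 0 := by
  haveI : Nonempty K := ⟨⟨p, hp⟩⟩
  rw [← norm_eq_iInf_iff_real_inner_le_zero hK hp]
  refine le_antisymm (le_ciInf fun w => hmin w w.2) ?_
  have hbdd : BddBelow (Set.range fun w : K => ‖u - (w : E)‖) := by
    refine ⟨0, ?_⟩
    rintro x ⟨w, rfl⟩
    exact norm_nonneg _
  exact ciInf_le hbdd ⟨p, hp⟩

/-- Let `K ⊆ ℝ^n` be closed convex with `θ₀ ∈ K`, and let `C_K(θ₀)` be the tangent cone of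
`K` at `θ₀` (the closure of the smallest convex cone containing `K − θ₀`).  Then for any
`z ∈ ℝ^n` and `τ ≥ 0`, `‖P_K(θ₀ + τz) − θ₀‖₂ ≤ ‖P_{C_K(θ₀)}(τz)‖₂`.  The Euclidean
projections are characterized as the minimizers of the distance. -/
theorem stmt16 (n : ℕ) (K : Set (EuclideanSpace ℝ (Fin n)))
    (hConv : Convex ℝ K) (hClosed : IsClosed K)
    (θ₀ : EuclideanSpace ℝ (Fin n)) (hθ : θ₀ ∈ K)
    (z : EuclideanSpace ℝ (Fin n)) (τ : ℝ) (hτ : 0 ≤ τ)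
    (C : Set (EuclideanSpace ℝ (Fin n)))
    (hC : C = closure {v | ∃ r : ℝ, 0 ≤ r ∧ ∃ x ∈ K, v = r • (x - θ₀)})
    (p q : EuclideanSpace ℝ (Fin n))
    (hpK : p ∈ K) (hp : ∀ w ∈ K, ‖θ₀ + τ • z - p‖ ≤ ‖θ₀ + τ • z - w‖)
    (hqC : q ∈ C) (hq : ∀ w ∈ C, ‖τ • z - q‖ ≤ ‖τ • z - w‖) :
    ‖p - θ₀‖ ≤ ‖q‖ := by
  set S : Set (EuclideanSpace ℝ (Fin n)) := {v | ∃ r : ℝ, 0 ≤ r ∧ ∃ x ∈ K, v = r • (x - θ₀)} with hS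
  have hSconv : Convex ℝ S := by
    rintro _ ⟨r₁, hr₁, x₁, hx₁, rfl⟩ _ ⟨r₂, hr₂, x₂, hx₂, rfl⟩ a b ha hb hab
    by_cases hs : a * r₁ + b * r₂ = 0
    · have h1 : a * r₁ = 0 := by nlinarith [mul_nonneg ha hr₁, mul_nonneg hb hr₂]
      have h2 : b * r₂ = 0 := by nlinarith [mul_nonneg ha hr₁, mul_nonneg hb hr₂]
      refine ⟨0, le_refl 0, θ₀, hθ, ?_⟩
      rw [smul_smul, smul_smul, h1, h2]; simp
    · have hs' : 0 < a * r₁ + b * r₂ :=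
        lt_of_le_of_ne (by positivity) (Ne.symm hs)
      refine ⟨a * r₁ + b * r₂, hs'.le,
        (a * r₁ / (a * r₁ + b * r₂)) • x₁ + (b * r₂ / (a * r₁ + b * r₂)) • x₂,
        hConv hx₁ hx₂ (by positivity) (by positivity) (by field_simp), ?_⟩
      match_scalars <;> field_simp <;> ring
  have hCconv : Convex ℝ C := hC ▸ hSconv.closure
  set u : EuclideanSpace ℝ (Fin n) := τ • z with hu
  set v : EuclideanSpace ℝ (Fin n) := p - θ₀ with hv
  have hvC : v ∈ C := hC ▸ subset_closure ⟨1, zero_le_one, p, hpK, (one_smul _ _).symm⟩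
  have h0C : (0 : EuclideanSpace ℝ (Fin n)) ∈ C :=
    hC ▸ subset_closure ⟨0, le_refl 0, θ₀, hθ, (zero_smul _ _).symm⟩
  have h2q : (2 : ℝ) • q ∈ C := by
    rw [hC]
    refine map_mem_closure (continuous_const_smul (2 : ℝ)) (hC ▸ hqC) ?_
    rintro _ ⟨r, hr, x, hx, rfl⟩
    exact ⟨2 * r, by positivity, x, hx, smul_smul _ _ _⟩
  -- variational inequality for p
  have hpvar := var_ineq hConv hpK hp
  have hKθ : ⟪u - v, v⟫ ≥ 0 := by
    have := hpvar θ₀ hθ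
    have heq : θ₀ + τ • z - p = u - v := by rw [hu, hv]; abel
    have heq2 : θ₀ - p = -v := by rw [hv]; abel
    rw [heq, heq2] at this
    rw [inner_neg_right] at this
    linarith
  -- variational inequality for q
  have hqvar := var_ineq hCconv hqC hq
  have hqq : ⟪u - q, q⟫ = 0 := by
    have h1 := hqvar ((2 : ℝ) • q) h2q
    have h2 := hqvar 0 h0C
    have e1 : (2 : ℝ) • q - q = q := by
      rw [two_smul]; abel
    rw [e1] at h1
    rw [zero_sub, inner_neg_right] at h2
    linarith
  have hqv : ⟪u - q, v⟫ ≤ 0 := by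
    have h1 := hqvar v hvC
    have : ⟪u - q, v - q⟫ = ⟪u - q, v⟫ - ⟪u - q, q⟫ := by
      rw [inner_sub_right]
    rw [this, hqq] at h1
    linarith
  have key : ‖v‖ ^ 2 ≤ ⟪q, v⟫ := by
    have h1 : ⟪u, v⟫ - ⟪v, v⟫ ≥ 0 := by
      have := hKθ; rw [inner_sub_left] at this; linarith
    have h2 : ⟪u, v⟫ - ⟪q, v⟫ ≤ 0 := by
      have := hqv; rw [inner_sub_left] at this; linarith
    have h3 : ⟪v, v⟫ = ‖v‖ ^ 2 := real_inner_self_eq_norm_sq v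
    linarith
  have hcs : ⟪q, v⟫ ≤ ‖q‖ * ‖v‖ := real_inner_le_norm q v
  have hvn : (0:ℝ) ≤ ‖v‖ := norm_nonneg v
  have hqn : (0:ℝ) ≤ ‖q‖ := norm_nonneg q
  have : ‖v‖ ≤ ‖q‖ := by nlinarith
  simpa [hv] using this
end
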